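/- arXiv:0902.0693 — 4 statements merged into one kernel-verified Lean document; each statement's English description precedes it below -/
import Mathlib

section
/- Let u assign to each lattice point (n,m) ∈ ℤ×ℤ a smooth real function u_{n,m}(α,β) on an open set D ⊆ ℝ² on which α ≠ β. Assume that for every (n,m) ∈ ℤ² and every (α,β) ∈ D: (i) the lattice equation H1 holds: (u_{n,m} − u_{n+1,m+1})·(u_{n+1,m} − u_{n,m+1}) = α − β; (ii) u_{n+1,m} − u_{n−1,m} ≠ 0 and u_{n,m+1} − u_{n,m−1} ≠ 0; (iii) the invariant surface conditions hold: ∂u_{n,m}/∂α = −n/(u_{n+1,m} − u_{n−1,m}) and ∂u_{n,m}/∂β = −m/(u_{n,m+1} − u_{n,m−1}). Then for every (n,m) ∈ ℤ², the triple (u, u1, u2) := (u_{n,m}, u_{n+1,m}, u_{n,m+1}) satisfies the H1 reduced system Σ_H1(n,m) on D. -/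
/-- Partial derivative with respect to the first variable. -/
noncomputable def pda (f : ℝ × ℝ → ℝ) (p : ℝ × ℝ) : ℝ :=
  deriv (fun x => f (x, p.2)) p.1

/-- Partial derivative with respect to the second variable. -/
noncomputable def pdb (f : ℝ × ℝ → ℝ) (p : ℝ × ℝ) : ℝ :=
  deriv (fun y => f (p.1, y)) p.2

/-- The H1 reduced system Σ_H1(n,m). -/
def SigmaH1 (n m : ℤ) (u u1 u2 : ℝ × ℝ → ℝ) (p : ℝ × ℝ) : Prop :=
  pdb u1 p = ((u1 p - u2 p) / (p.1 - p.2)) * ((m : ℝ) - (u1 p - u2 p) * pdb u p) ∧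
  pda u2 p = ((u1 p - u2 p) / (p.1 - p.2)) * ((n : ℝ) + (u1 p - u2 p) * pda u p) ∧
  pdb (pda u) p = (1 / (p.1 - p.2)) *
    (2 * (u1 p - u2 p) * pda u p * pdb u p + (n : ℝ) * pdb u p - (m : ℝ) * pda u p)

theorem continuously_invariant_H1_satisfies_Sigma
    (u : ℤ → ℤ → ℝ × ℝ → ℝ) (D : Set (ℝ × ℝ)) (hD : IsOpen D)
    (hαβ : ∀ p ∈ D, p.1 ≠ p.2)
    (hsmooth : ∀ n m : ℤ, ContDiffOn ℝ (⊤ : ℕ∞) (u n m) D)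
    (hH1 : ∀ n m : ℤ, ∀ p ∈ D,
      (u n m p - u (n+1) (m+1) p) * (u (n+1) m p - u n (m+1) p) = p.1 - p.2)
    (hden1 : ∀ n m : ℤ, ∀ p ∈ D, u (n+1) m p - u (n-1) m p ≠ 0)
    (hden2 : ∀ n m : ℤ, ∀ p ∈ D, u n (m+1) p - u n (m-1) p ≠ 0)
    (hisc1 : ∀ n m : ℤ, ∀ p ∈ D,
      pda (u n m) p = -(n : ℝ) / (u (n+1) m p - u (n-1) m p))
    (hisc2 : ∀ n m : ℤ, ∀ p ∈ D,
      pdb (u n m) p = -(m : ℝ) / (u n (m+1) p - u n (m-1) p)) :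
    ∀ n m : ℤ, ∀ p ∈ D, SigmaH1 n m (u n m) (u (n+1) m) (u n (m+1)) p := by
  intro n m p hp
  have hs : p.1 - p.2 ≠ 0 := sub_ne_zero.mpr (hαβ p hp)
  -- lattice equations at the four relevant quads, with indices normalized
  have h1 := hH1 n m p hp
  have h2 := hH1 n (m-1) p hp
  rw [show m - 1 + 1 = m from by ring] at h2
  have h3 := hH1 (n-1) m p hp
  rw [show n - 1 + 1 = n from by ring] at h3
  have h4 := hH1 (n-1) (m-1) p hp
  rw [show n - 1 + 1 = n from by ring, show m - 1 + 1 = m from by ring] at h4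
  set s := p.1 - p.2 with hsdef
  set U := u n m p with hU
  set a := u (n+1) m p with ha
  set b := u (n-1) m p with hb
  set c := u n (m+1) p with hc
  set d := u n (m-1) p with hd
  set X := u (n+1) (m+1) p with hX   -- u_{n+1,m+1}
  set E := u (n+1) (m-1) p with hE   -- u_{n+1,m-1}
  set F := u (n-1) (m+1) p with hF   -- u_{n-1,m+1}
  set G := u (n-1) (m-1) p with hG   -- u_{n-1,m-1}
  -- h1 : (U - X) * (a - c) = s
  -- h2 : (d - a) * (E - U) = s
  -- h3 : (b - c) * (U - F) = s
  -- h4 : (G - U) * (d - b) = s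
  have hac : a - c ≠ 0 := by intro h; rw [h, mul_zero] at h1; exact hs h1.symm
  have hda : d - a ≠ 0 := by intro h; rw [h, zero_mul] at h2; exact hs h2.symm
  have hbc : b - c ≠ 0 := by intro h; rw [h, zero_mul] at h3; exact hs h3.symm
  have hdb : d - b ≠ 0 := by intro h; rw [h, mul_zero] at h4; exact hs h4.symm
  have hab : a - b ≠ 0 := hden1 n m p hp
  have hcd : c - d ≠ 0 := hden2 n m p hp
  have hdc : d - c ≠ 0 := fun h => hcd (by linarith [sub_eq_zero.mp h])
  have hXE : X - E ≠ 0 := hden2 (n+1) m p hp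
  have hXF : X - F ≠ 0 := hden1 n (m+1) p hp
  have hFG : F - G ≠ 0 := hden2 (n-1) m p hp
  -- values of the corner neighbors
  have hXv : X = U - s / (a - c) := by field_simp; linear_combination -h1
  have hEv : E = U + s / (d - a) := by field_simp; linear_combination h2
  have hFv : F = U - s / (b - c) := by field_simp; linear_combination -h3
  have hGv : G = U + s / (d - b) := by field_simp; linear_combination h4
  have hXEv : X - E = -(s * (d - c)) / ((a - c) * (d - a)) := by
    rw [hXv, hEv]; field_simp; ring
  have hXFv : X - F = s * (a - b) / ((b - c) * (a - c)) := by
    rw [hXv, hFv]; field_simp; ring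
  have hFGv : F - G = -(s * (d - c)) / ((b - c) * (d - b)) := by
    rw [hFv, hGv]; field_simp; ring
  -- first derivatives from the invariant surface conditions
  have hA : pda (u n m) p = -(n : ℝ) / (a - b) := hisc1 n m p hp
  have hB : pdb (u n m) p = -(m : ℝ) / (c - d) := hisc2 n m p hp
  have hpdbu1 : pdb (u (n+1) m) p = (m : ℝ) * (a - c) * (d - a) / (s * (d - c)) := by
    rw [hisc2 (n+1) m p hp, ← hX, ← hE, hXEv]
    field_simp
  have hpdbb : pdb (u (n-1) m) p = (m : ℝ) * (b - c) * (d - b) / (s * (d - c)) := by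
    rw [hisc2 (n-1) m p hp, ← hF, ← hG, hFGv]
    field_simp
  have hpdau2 : pda (u n (m+1)) p = -(n : ℝ) * (b - c) * (a - c) / (s * (a - b)) := by
    rw [hisc1 n (m+1) p hp, ← hX, ← hF, hXFv]
    field_simp
  -- the mixed second derivative
  have hkey : pdb (pda (u n m)) p
      = (n : ℝ) * (pdb (u (n+1) m) p - pdb (u (n-1) m) p) / ((a - b) ^ 2) := by
    have hmem : ∀ᶠ y in nhds p.2, (p.1, y) ∈ D :=
      (hD.preimage (Continuous.prodMk_right p.1)).mem_nhds hp
    have hdF : HasDerivAt (fun y => u (n+1) m (p.1, y)) (pdb (u (n+1) m) p) p.2 := by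
      have hdiff : DifferentiableAt ℝ (u (n+1) m) p :=
        ((hsmooth (n+1) m).contDiffAt (hD.mem_nhds hp)).differentiableAt (by simp)
      exact (hdiff.comp p.2 ((differentiableAt_const _).prodMk differentiableAt_id)).hasDerivAt
    have hdG : HasDerivAt (fun y => u (n-1) m (p.1, y)) (pdb (u (n-1) m) p) p.2 := by
      have hdiff : DifferentiableAt ℝ (u (n-1) m) p :=
        ((hsmooth (n-1) m).contDiffAt (hD.mem_nhds hp)).differentiableAt (by simp)
      exact (hdiff.comp p.2 ((differentiableAt_const _).prodMk differentiableAt_id)).hasDerivAt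
    have hne : (fun y => u (n+1) m (p.1, y)) p.2 - (fun y => u (n-1) m (p.1, y)) p.2 ≠ 0 := hab
    have hdQ : HasDerivAt (fun y => -(n : ℝ) / (u (n+1) m (p.1, y) - u (n-1) m (p.1, y)))
        ((n : ℝ) * (pdb (u (n+1) m) p - pdb (u (n-1) m) p) / ((a - b) ^ 2)) p.2 := by
      have := (hasDerivAt_const p.2 (-(n : ℝ))).div (hdF.sub hdG) hne
      refine this.congr_deriv ?_
      simp only [Pi.sub_apply, Prod.mk.eta]
      field_simp
      ring
    have hev : (fun y => pda (u n m) (p.1, y))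
        =ᶠ[nhds p.2] fun y => -(n : ℝ) / (u (n+1) m (p.1, y) - u (n-1) m (p.1, y)) :=
      hmem.mono fun y hy => hisc1 n m (p.1, y) hy
    exact (hdQ.congr_of_eventuallyEq hev).deriv
  refine ⟨?_, ?_, ?_⟩ <;> simp only [← hsdef, ← hU, ← ha, ← hc]
  · rw [hpdbu1, hB]
    field_simp
    ring
  · rw [hpdau2, hA]
    field_simp
    ring
  · rw [hkey, hpdbu1, hpdbb, hA, hB]
    field_simp
    ring
end

section
/- (Auto-Bäcklund transformation of the H1 reduced system.) Fix integers n, m and λ ∈ ℝ. Let (u, u1, u2) be smooth functions satisfying the H1 reduced system Σ_H1(n,m) on an open set D ⊆ ℝ² where α ≠ β, α ≠ λ and β ≠ λ. Let ũ be a smooth function on D with u1 − ũ ≠ 0 and u2 − ũ ≠ 0, satisfying ∂ũ/∂α = ((u1−ũ)²·∂u/∂α + n·(u1−ũ))/(α−λ) and ∂ũ/∂β = ((u2−ũ)²·∂u/∂β + m·(u2−ũ))/(β−λ). Define ũ1 := u − (α−λ)/(u1−ũ) and ũ2 := u − (β−λ)/(u2−ũ). Then (ũ, ũ1, ũ2)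 satisfies the H1 reduced system Σ_H1(n,m) on D. -/
lemma hasDerivAt_slice_a {f : ℝ × ℝ → ℝ} {p : ℝ × ℝ} (hf : DifferentiableAt ℝ f p) :
    HasDerivAt (fun x => f (x, p.2)) (pda f p) p.1 := by
  have h0 : HasDerivAt (fun x : ℝ => (x, p.2)) ((1 : ℝ), (0 : ℝ)) p.1 :=
    (hasDerivAt_id p.1).prodMk (hasDerivAt_const p.1 p.2)
  have h : HasDerivAt (fun x : ℝ => f (x, p.2)) (fderiv ℝ f p (1, 0)) p.1 :=
    hf.hasFDerivAt.comp_hasDerivAt p.1 h0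
  exact h.differentiableAt.hasDerivAt

lemma hasDerivAt_slice_b {f : ℝ × ℝ → ℝ} {p : ℝ × ℝ} (hf : DifferentiableAt ℝ f p) :
    HasDerivAt (fun y => f (p.1, y)) (pdb f p) p.2 := by
  have h0 : HasDerivAt (fun y : ℝ => (p.1, y)) ((0 : ℝ), (1 : ℝ)) p.2 :=
    (hasDerivAt_const p.2 p.1).prodMk (hasDerivAt_id p.2)
  have h : HasDerivAt (fun y : ℝ => f (p.1, y)) (fderiv ℝ f p (0, 1)) p.2 :=
    hf.hasFDerivAt.comp_hasDerivAt p.2 h0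
  exact h.differentiableAt.hasDerivAt

lemma pda_eq_fderiv {f : ℝ × ℝ → ℝ} {p : ℝ × ℝ} (hf : DifferentiableAt ℝ f p) :
    pda f p = fderiv ℝ f p (1, 0) := by
  have h0 : HasDerivAt (fun x : ℝ => (x, p.2)) ((1 : ℝ), (0 : ℝ)) p.1 :=
    (hasDerivAt_id p.1).prodMk (hasDerivAt_const p.1 p.2)
  exact (hf.hasFDerivAt.comp_hasDerivAt p.1 h0).deriv

set_option maxHeartbeats 1000000 in
private lemma algH1_1 (a1 a2 t w B al be lam M : ℝ)
    (hαβ : al - be ≠ 0) (hal : al - lam ≠ 0) (hbl : be - lam ≠ 0)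
    (h1 : a1 - t ≠ 0) (h2 : a2 - t ≠ 0) :
    B - (0 * (a1 - t) - (al - lam) * ((a1 - a2) / (al - be) * (M - (a1 - a2) * B)
        - ((a2 - t) ^ 2 * B + M * (a2 - t)) / (be - lam))) / (a1 - t) ^ 2 =
      (w - (al - lam) / (a1 - t) - (w - (be - lam) / (a2 - t))) / (al - be) *
        (M - (w - (al - lam) / (a1 - t) - (w - (be - lam) / (a2 - t))) *
          (((a2 - t) ^ 2 * B + M * (a2 - t)) / (be - lam))) := by
  field_simp
  ring

set_option maxHeartbeats 1000000 in
private lemma algH1_2 (a1 a2 t w A al be lam N : ℝ)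
    (hαβ : al - be ≠ 0) (hal : al - lam ≠ 0) (hbl : be - lam ≠ 0)
    (h1 : a1 - t ≠ 0) (h2 : a2 - t ≠ 0) :
    A - (0 * (a2 - t) - (be - lam) * ((a1 - a2) / (al - be) * (N + (a1 - a2) * A)
        - ((a1 - t) ^ 2 * A + N * (a1 - t)) / (al - lam))) / (a2 - t) ^ 2 =
      (w - (al - lam) / (a1 - t) - (w - (be - lam) / (a2 - t))) / (al - be) *
        (N + (w - (al - lam) / (a1 - t) - (w - (be - lam) / (a2 - t))) *
          (((a1 - t) ^ 2 * A + N * (a1 - t)) / (al - lam))) := by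
  field_simp
  ring

set_option maxHeartbeats 2000000 in
private lemma algH1_3 (a1 a2 t w A B al be lam N M : ℝ)
    (hαβ : al - be ≠ 0) (hal : al - lam ≠ 0) (hbl : be - lam ≠ 0)
    (h1 : a1 - t ≠ 0) (h2 : a2 - t ≠ 0) :
    (((2 : ℕ) : ℝ) * (a1 - t) ^ (2 - 1) *
          ((a1 - a2) / (al - be) * (M - (a1 - a2) * B)
            - ((a2 - t) ^ 2 * B + M * (a2 - t)) / (be - lam)) * A
        + (a1 - t) ^ 2 * (1 / (al - be) * (2 * (a1 - a2) * A * B + N * B - M * A))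
        + N * ((a1 - a2) / (al - be) * (M - (a1 - a2) * B)
            - ((a2 - t) ^ 2 * B + M * (a2 - t)) / (be - lam))) / (al - lam) =
      1 / (al - be) *
        (2 * (w - (al - lam) / (a1 - t) - (w - (be - lam) / (a2 - t))) *
            (((a1 - t) ^ 2 * A + N * (a1 - t)) / (al - lam)) *
            (((a2 - t) ^ 2 * B + M * (a2 - t)) / (be - lam))
          + N * (((a2 - t) ^ 2 * B + M * (a2 - t)) / (be - lam))
          - M * (((a1 - t) ^ 2 * A + N * (a1 - t)) / (al - lam))) := by
  norm_num
  field_simp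
  ring

/-- Auto-Bäcklund transformation of the H1 reduced system. -/
theorem autoBacklund_H1_reduced_system
    (n m : ℤ) (lam : ℝ) (u u1 u2 ut : ℝ × ℝ → ℝ)
    (D : Set (ℝ × ℝ)) (hD : IsOpen D)
    (hαβ : ∀ p ∈ D, p.1 ≠ p.2) (hal : ∀ p ∈ D, p.1 ≠ lam) (hbl : ∀ p ∈ D, p.2 ≠ lam)
    (hu : ContDiffOn ℝ (⊤ : ℕ∞) u D) (hu1 : ContDiffOn ℝ (⊤ : ℕ∞) u1 D) (hu2 : ContDiffOn ℝ (⊤ : ℕ∞) u2 D)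
    (hut : ContDiffOn ℝ (⊤ : ℕ∞) ut D)
    (hSigma : ∀ p ∈ D, SigmaH1 n m u u1 u2 p)
    (hne1 : ∀ p ∈ D, u1 p - ut p ≠ 0) (hne2 : ∀ p ∈ D, u2 p - ut p ≠ 0)
    (hbt1 : ∀ p ∈ D, pda ut p =
      ((u1 p - ut p) ^ 2 * pda u p + (n : ℝ) * (u1 p - ut p)) / (p.1 - lam))
    (hbt2 : ∀ p ∈ D, pdb ut p =
      ((u2 p - ut p) ^ 2 * pdb u p + (m : ℝ) * (u2 p - ut p)) / (p.2 - lam)) :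
    ∀ p ∈ D, SigmaH1 n m ut
      (fun q => u q - (q.1 - lam) / (u1 q - ut q))
      (fun q => u q - (q.2 - lam) / (u2 q - ut q)) p := by
  intro p hp
  have hαβ' : p.1 - p.2 ≠ 0 := sub_ne_zero.mpr (hαβ p hp)
  have hal' : p.1 - lam ≠ 0 := sub_ne_zero.mpr (hal p hp)
  have hbl' : p.2 - lam ≠ 0 := sub_ne_zero.mpr (hbl p hp)
  have h1 := hne1 p hp
  have h2 := hne2 p hp
  obtain ⟨e1, e2, e3⟩ := hSigma p hp
  have b1 := hbt1 p hp
  have b2 := hbt2 p hp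
  have hpd : D ∈ nhds p := hD.mem_nhds hp
  have du : DifferentiableAt ℝ u p := (hu.differentiableOn (by simp)).differentiableAt hpd
  have du1 : DifferentiableAt ℝ u1 p := (hu1.differentiableOn (by simp)).differentiableAt hpd
  have du2 : DifferentiableAt ℝ u2 p := (hu2.differentiableOn (by simp)).differentiableAt hpd
  have dut : DifferentiableAt ℝ ut p := (hut.differentiableOn (by simp)).differentiableAt hpd
  have hA_u : HasDerivAt (fun x => u (x, p.2)) (pda u p) p.1 := hasDerivAt_slice_a du
  have hA_u2 : HasDerivAt (fun x => u2 (x, p.2)) (pda u2 p) p.1 := hasDerivAt_slice_a du2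
  have hA_ut : HasDerivAt (fun x => ut (x, p.2)) (pda ut p) p.1 := hasDerivAt_slice_a dut
  have hB_u : HasDerivAt (fun y => u (p.1, y)) (pdb u p) p.2 := hasDerivAt_slice_b du
  have hB_u1 : HasDerivAt (fun y => u1 (p.1, y)) (pdb u1 p) p.2 := hasDerivAt_slice_b du1
  have hB_ut : HasDerivAt (fun y => ut (p.1, y)) (pdb ut p) p.2 := hasDerivAt_slice_b dut
  -- membership of the vertical slice near p.2
  have hmb : ∀ᶠ y in nhds p.2, (p.1, y) ∈ D := by
    have hc : ContinuousAt (fun y : ℝ => (p.1, y)) p.2 :=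
      (continuous_const.prodMk continuous_id).continuousAt
    exact hc.preimage_mem_nhds hpd
  -- the mixed partial: HasDerivAt of the β-slice of `pda u`
  have hg : ContDiffOn ℝ (⊤ : ℕ∞) (fun q => fderiv ℝ u q (1, 0)) D :=
    (hu.fderiv_of_isOpen hD (by simp)).clm_apply contDiffOn_const
  have dg : DifferentiableAt ℝ (fun q => fderiv ℝ u q (1, 0)) p :=
    (hg.differentiableOn (by simp)).differentiableAt hpd
  have hBg : HasDerivAt (fun y => fderiv ℝ u (p.1, y) (1, 0))
      (pdb (fun q => fderiv ℝ u q (1, 0)) p) p.2 := hasDerivAt_slice_b dg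
  have heqg : (fun y => pda u (p.1, y)) =ᶠ[nhds p.2] (fun y => fderiv ℝ u (p.1, y) (1, 0)) :=
    hmb.mono fun y hy =>
      pda_eq_fderiv ((hu.differentiableOn (by simp)).differentiableAt (hD.mem_nhds hy))
  have hMix : HasDerivAt (fun y => pda u (p.1, y)) (pdb (pda u) p) p.2 := by
    have h := hBg.congr_of_eventuallyEq heqg
    have hd : pdb (pda u) p = pdb (fun q => fderiv ℝ u q (1, 0)) p := h.deriv
    rw [hd]; exact h
  -- equation 1
  have hq1 : HasDerivAt
      (fun y => u (p.1, y) - (p.1 - lam) / (u1 (p.1, y) - ut (p.1, y)))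
      (pdb u p - (0 * (u1 p - ut p) - (p.1 - lam) * (pdb u1 p - pdb ut p)) / (u1 p - ut p) ^ 2)
      p.2 :=
    hB_u.sub ((hasDerivAt_const p.2 (p.1 - lam)).div (hB_u1.sub hB_ut) h1)
  have hval1 : pdb (fun q => u q - (q.1 - lam) / (u1 q - ut q)) p =
      pdb u p - (0 * (u1 p - ut p) - (p.1 - lam) * (pdb u1 p - pdb ut p)) / (u1 p - ut p) ^ 2 :=
    hq1.deriv
  -- equation 2
  have hq2 : HasDerivAt
      (fun x => u (x, p.2) - (p.2 - lam) / (u2 (x, p.2) - ut (x, p.2)))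
      (pda u p - (0 * (u2 p - ut p) - (p.2 - lam) * (pda u2 p - pda ut p)) / (u2 p - ut p) ^ 2)
      p.1 :=
    hA_u.sub ((hasDerivAt_const p.1 (p.2 - lam)).div (hA_u2.sub hA_ut) h2)
  have hval2 : pda (fun q => u q - (q.2 - lam) / (u2 q - ut q)) p =
      pda u p - (0 * (u2 p - ut p) - (p.2 - lam) * (pda u2 p - pda ut p)) / (u2 p - ut p) ^ 2 :=
    hq2.deriv
  -- equation 3
  have hq3 : HasDerivAt
      (fun y => ((u1 (p.1, y) - ut (p.1, y)) ^ 2 * pda u (p.1, y)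
        + (n : ℝ) * (u1 (p.1, y) - ut (p.1, y))) / (p.1 - lam))
      ((((2 : ℕ) : ℝ) * (u1 p - ut p) ^ (2 - 1) * (pdb u1 p - pdb ut p) * pda u p
        + (u1 p - ut p) ^ 2 * pdb (pda u) p
        + (n : ℝ) * (pdb u1 p - pdb ut p)) / (p.1 - lam)) p.2 :=
    ((((hB_u1.sub hB_ut).pow 2).mul hMix).add
      ((hB_u1.sub hB_ut).const_mul (n : ℝ))).div_const (p.1 - lam)
  have heq3 : (fun y => pda ut (p.1, y)) =ᶠ[nhds p.2]
      (fun y => ((u1 (p.1, y) - ut (p.1, y)) ^ 2 * pda u (p.1, y)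
        + (n : ℝ) * (u1 (p.1, y) - ut (p.1, y))) / (p.1 - lam)) :=
    hmb.mono fun y hy => hbt1 (p.1, y) hy
  have hq3' : HasDerivAt (fun y => pda ut (p.1, y))
      ((((2 : ℕ) : ℝ) * (u1 p - ut p) ^ (2 - 1) * (pdb u1 p - pdb ut p) * pda u p
        + (u1 p - ut p) ^ 2 * pdb (pda u) p
        + (n : ℝ) * (pdb u1 p - pdb ut p)) / (p.1 - lam)) p.2 :=
    hq3.congr_of_eventuallyEq heq3
  have hval3 : pdb (pda ut) p =
      (((2 : ℕ) : ℝ) * (u1 p - ut p) ^ (2 - 1) * (pdb u1 p - pdb ut p) * pda u p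
        + (u1 p - ut p) ^ 2 * pdb (pda u) p
        + (n : ℝ) * (pdb u1 p - pdb ut p)) / (p.1 - lam) := hq3'.deriv
  refine ⟨?_, ?_, ?_⟩
  · show pdb (fun q => u q - (q.1 - lam) / (u1 q - ut q)) p = _
    beta_reduce
    rw [hval1, e1, b2]
    exact algH1_1 (u1 p) (u2 p) (ut p) (u p) (pdb u p) p.1 p.2 lam (m : ℝ)
      hαβ' hal' hbl' h1 h2
  · show pda (fun q => u q - (q.2 - lam) / (u2 q - ut q)) p = _
    beta_reduce
    rw [hval2, e2, b1]
    exact algH1_2 (u1 p) (u2 p) (ut p) (u p) (pda u p) p.1 p.2 lam (n : ℝ)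
      hαβ' hal' hbl' h1 h2
  · show pdb (pda ut) p = _
    beta_reduce
    rw [hval3, e1, e3, b1, b2]
    exact algH1_3 (u1 p) (u2 p) (ut p) (u p) (pda u p) (pdb u p) p.1 p.2 lam (n : ℝ) (m : ℝ)
      hαβ' hal' hbl' h1 h2
end

section
/- (Point symmetries of the H1 reduced system.) Fix integers n, m and t ∈ ℝ, and let (u, u1, u2) be smooth functions satisfying the H1 reduced system Σ_H1(n,m) on an open set D ⊆ ℝ² where α ≠ β. Then each of the following triples again satisfies Σ_H1(n,m) on the appropriately transformed domain: (1) ((α,β) ↦ u(α−t, β−t), (α,β) ↦ u1(α−t, β−t), (α,β) ↦ u2(α−t, β−t)); (2) ((α,β) ↦ e^t·u(e^{−t}α, e^{−t}β), (α,β) ↦ u1(e^{−t}α, e^{−t}β), (α,β) ↦ u2(e^{−t}α, e^{−t}β)); (3) (u+t, u1, u2); (4) (u, u1+t, u2+t); (5) (e^t·u, e^{−t}·u1, e^{−t}·u2). These are the flows of the symmetry generators w1 = ∂_α + ∂_β, w2 = α∂_α + β∂_β + u∂_u, w3 = ∂_u, w4 = ∂_{u1} + ∂_{u2}, w5 = u∂_u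 − u1∂_{u1} − u2∂_{u2}. -/
/-- Unconditional chain rule for scaling the argument. -/
lemma deriv_comp_const_mul' (f : ℝ → ℝ) (c x : ℝ) :
    deriv (fun x => f (c * x)) x = c * deriv f (c * x) := by
  rcases eq_or_ne c 0 with rfl | hc
  · simp
  · by_cases hf : DifferentiableAt ℝ f (c * x)
    · have hmul : HasDerivAt (fun y : ℝ => c * y) c x := by
        simpa using (hasDerivAt_id x).const_mul c
      have h := HasDerivAt.comp x hf.hasDerivAt hmul
      rw [show (fun x => f (c * x)) = f ∘ (fun y : ℝ => c * y) from rfl, h.deriv]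
      ring
    · have h2 : ¬ DifferentiableAt ℝ (fun x => f (c * x)) x := by
        intro h
        have hin : DifferentiableAt ℝ (fun y : ℝ => c⁻¹ * y) (c * x) :=
          (differentiable_id.const_mul c⁻¹).differentiableAt
        have hgx : DifferentiableAt ℝ (fun x => f (c * x)) ((fun y : ℝ => c⁻¹ * y) (c * x)) := by
          simpa [inv_mul_cancel_left₀ hc] using h
        have hcomp := hgx.comp (c * x) hin
        have he : ((fun x => f (c * x)) ∘ fun y : ℝ => c⁻¹ * y) = f := by
          funext y
          simp [Function.comp, mul_inv_cancel_left₀ hc]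
        rw [he] at hcomp
        exact hf hcomp
      rw [deriv_zero_of_not_differentiableAt h2,
        deriv_zero_of_not_differentiableAt hf, mul_zero]

lemma pda_shift (f : ℝ × ℝ → ℝ) (t : ℝ) (p : ℝ × ℝ) :
    pda (fun q => f (q.1 - t, q.2 - t)) p = pda f (p.1 - t, p.2 - t) :=
  deriv_comp_sub_const (fun x => f (x, p.2 - t)) t p.1

lemma pdb_shift (f : ℝ × ℝ → ℝ) (t : ℝ) (p : ℝ × ℝ) :
    pdb (fun q => f (q.1 - t, q.2 - t)) p = pdb f (p.1 - t, p.2 - t) :=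
  deriv_comp_sub_const (fun y => f (p.1 - t, y)) t p.2

lemma pda_scale (f : ℝ × ℝ → ℝ) (c : ℝ) (p : ℝ × ℝ) :
    pda (fun q => f (c * q.1, c * q.2)) p = c * pda f (c * p.1, c * p.2) :=
  deriv_comp_const_mul' (fun x => f (x, c * p.2)) c p.1

lemma pdb_scale (f : ℝ × ℝ → ℝ) (c : ℝ) (p : ℝ × ℝ) :
    pdb (fun q => f (c * q.1, c * q.2)) p = c * pdb f (c * p.1, c * p.2) :=
  deriv_comp_const_mul' (fun y => f (c * p.1, y)) c p.2

lemma pda_const_mul (f : ℝ × ℝ → ℝ) (a : ℝ) (p : ℝ × ℝ) :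
    pda (fun q => a * f q) p = a * pda f p :=
  deriv_const_mul_field a

lemma pdb_const_mul (f : ℝ × ℝ → ℝ) (a : ℝ) (p : ℝ × ℝ) :
    pdb (fun q => a * f q) p = a * pdb f p :=
  deriv_const_mul_field a

lemma pda_add_const (f : ℝ × ℝ → ℝ) (a : ℝ) (p : ℝ × ℝ) :
    pda (fun q => f q + a) p = pda f p :=
  deriv_add_const a

lemma pdb_add_const (f : ℝ × ℝ → ℝ) (a : ℝ) (p : ℝ × ℝ) :
    pdb (fun q => f q + a) p = pdb f p :=
  deriv_add_const a

/-- Auxiliary: scaling symmetry in general form. -/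
lemma sigmaH1_scale (n m : ℤ) (u u1 u2 : ℝ × ℝ → ℝ) (a c : ℝ) (hac : a * c = 1)
    (p : ℝ × ℝ) (hne : c * p.1 ≠ c * p.2)
    (h : SigmaH1 n m u u1 u2 (c * p.1, c * p.2)) :
    SigmaH1 n m (fun q => a * u (c * q.1, c * q.2)) (fun q => u1 (c * q.1, c * q.2))
      (fun q => u2 (c * q.1, c * q.2)) p := by
  have hc : c ≠ 0 := by rintro rfl; simp at hac
  obtain rfl : a = c⁻¹ := eq_inv_of_mul_eq_one_left hac
  have hp12 : p.1 ≠ p.2 := fun h' => hne (by rw [h'])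
  have hd : p.1 - p.2 ≠ 0 := sub_ne_zero.2 hp12
  obtain ⟨h1, h2, h3⟩ := h
  dsimp only at h1 h2 h3
  have e : c * p.1 - c * p.2 = c * (p.1 - p.2) := by ring
  rw [e] at h1 h2 h3
  have hpa : (pda fun q => c⁻¹ * u (c * q.1, c * q.2)) =
      fun q => pda u (c * q.1, c * q.2) := by
    funext q
    rw [show (fun q : ℝ × ℝ => c⁻¹ * u (c * q.1, c * q.2)) =
        (fun q : ℝ × ℝ => c⁻¹ * (fun r : ℝ × ℝ => u (c * r.1, c * r.2)) q) from rfl,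
      pda_const_mul, pda_scale, ← mul_assoc, inv_mul_cancel₀ hc, one_mul]
  refine ⟨?_, ?_, ?_⟩
  · simp only [pdb_const_mul, pdb_scale]
    rw [h1]
    field_simp
  · simp only [pda_const_mul, pda_scale]
    rw [h2]
    field_simp
  · simp only [hpa, pdb_const_mul, pdb_scale]
    rw [h3]
    field_simp

/-- Auxiliary: scaling of the dependent variables. -/
lemma sigmaH1_mul (n m : ℤ) (u u1 u2 : ℝ × ℝ → ℝ) (a c : ℝ) (hac : a * c = 1)
    (p : ℝ × ℝ) (hne : p.1 ≠ p.2) (h : SigmaH1 n m u u1 u2 p) :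
    SigmaH1 n m (fun q => a * u q) (fun q => c * u1 q) (fun q => c * u2 q) p := by
  have hc : c ≠ 0 := by rintro rfl; simp at hac
  obtain rfl : a = c⁻¹ := eq_inv_of_mul_eq_one_left hac
  have hd : p.1 - p.2 ≠ 0 := sub_ne_zero.2 hne
  obtain ⟨h1, h2, h3⟩ := h
  have hpa : (pda fun q => c⁻¹ * u q) = fun q => c⁻¹ * pda u q :=
    funext fun q => pda_const_mul u _ q
  refine ⟨?_, ?_, ?_⟩
  · simp only [pdb_const_mul]
    rw [h1]
    field_simp
  · simp only [pda_const_mul]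
    rw [h2]
    field_simp
  · simp only [hpa, pdb_const_mul, pda_const_mul]
    rw [h3]
    field_simp

/-- Point symmetries of the H1 reduced system: the flows of the generators
w1 = ∂_α + ∂_β, w2 = α∂_α + β∂_β + u∂_u, w3 = ∂_u, w4 = ∂_{u1} + ∂_{u2},
w5 = u∂_u − u1∂_{u1} − u2∂_{u2} map solutions to solutions. -/
theorem point_symmetries_H1_reduced_system
    (n m : ℤ) (t : ℝ) (u u1 u2 : ℝ × ℝ → ℝ)
    (D : Set (ℝ × ℝ)) (hD : IsOpen D)
    (hαβ : ∀ p ∈ D, p.1 ≠ p.2)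
    (hu : ContDiffOn ℝ (⊤ : ℕ∞) u D) (hu1 : ContDiffOn ℝ (⊤ : ℕ∞) u1 D) (hu2 : ContDiffOn ℝ (⊤ : ℕ∞) u2 D)
    (hS : ∀ p ∈ D, SigmaH1 n m u u1 u2 p) :
    (∀ p : ℝ × ℝ, (p.1 - t, p.2 - t) ∈ D →
      SigmaH1 n m (fun q => u (q.1 - t, q.2 - t)) (fun q => u1 (q.1 - t, q.2 - t))
        (fun q => u2 (q.1 - t, q.2 - t)) p) ∧
    (∀ p : ℝ × ℝ, (Real.exp (-t) * p.1, Real.exp (-t) * p.2) ∈ D →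
      SigmaH1 n m (fun q => Real.exp t * u (Real.exp (-t) * q.1, Real.exp (-t) * q.2))
        (fun q => u1 (Real.exp (-t) * q.1, Real.exp (-t) * q.2))
        (fun q => u2 (Real.exp (-t) * q.1, Real.exp (-t) * q.2)) p) ∧
    (∀ p ∈ D, SigmaH1 n m (fun q => u q + t) u1 u2 p) ∧
    (∀ p ∈ D, SigmaH1 n m u (fun q => u1 q + t) (fun q => u2 q + t) p) ∧
    (∀ p ∈ D, SigmaH1 n m (fun q => Real.exp t * u q)
      (fun q => Real.exp (-t) * u1 q) (fun q => Real.exp (-t) * u2 q) p) := by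
  have hexp : Real.exp t * Real.exp (-t) = 1 := by
    rw [← Real.exp_add]; simp
  refine ⟨?_, ?_, ?_, ?_, ?_⟩
  · -- translation
    intro p hp
    obtain ⟨h1, h2, h3⟩ := hS _ hp
    dsimp only at h1 h2 h3
    have e : p.1 - t - (p.2 - t) = p.1 - p.2 := by ring
    rw [e] at h1 h2 h3
    have hpa : (pda fun q => u (q.1 - t, q.2 - t)) =
        fun q => pda u (q.1 - t, q.2 - t) := funext fun q => pda_shift u t q
    refine ⟨?_, ?_, ?_⟩
    · simp only [pdb_shift]
      exact h1
    · simp only [pda_shift]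
      exact h2
    · simp only [hpa, pdb_shift, pda_shift]
      exact h3
  · -- scaling of independent variables
    intro p hp
    exact sigmaH1_scale n m u u1 u2 (Real.exp t) (Real.exp (-t)) hexp p (hαβ _ hp) (hS _ hp)
  · -- u ↦ u + t
    intro p hp
    obtain ⟨h1, h2, h3⟩ := hS _ hp
    have hpa : (pda fun q => u q + t) = pda u := funext fun q => pda_add_const u t q
    exact ⟨by rw [pdb_add_const]; exact h1, by rw [pda_add_const]; exact h2,
      by rw [hpa]; simp only [pdb_add_const]; exact h3⟩
  · -- u1, u2 ↦ u1 + t, u2 + t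
    intro p hp
    obtain ⟨h1, h2, h3⟩ := hS _ hp
    refine ⟨?_, ?_, ?_⟩
    · rw [pdb_add_const]
      simpa using h1
    · rw [pda_add_const]
      simpa using h2
    · simpa using h3
  · -- scaling of dependent variables
    intro p hp
    exact sigmaH1_mul n m u u1 u2 (Real.exp t) (Real.exp (-t)) hexp p (hαβ _ hp) (hS _ hp)
end

section
/- (Painlevé V similarity ansatz for the H1 reduced system.) Fix integers n, m and μ ∈ ℝ. Let I ⊆ ℝ be an open interval with 0 ∉ I, let T, T1, T2 be twice differentiable real functions on I, and set D := {(α,β) ∈ ℝ² : α − β ∈ I}. Define u(α,β) := T(α−β)·exp(μ(α+β)), u1(α,β) := T1(α−β)·exp(−μ(α+β)), u2(α,β) := T2(α−β)·exp(−μ(α+β)). Then (u, u1, u2) satisfies the H1 reduced system Σ_H1(n,m) on D if and only if (T, T1, T2) satisfies the reduced ODE system (sysH1redP5) on I. -/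
/-- The reduced ODE system (sysH1redP5). -/
def sysH1redP5 (n m : ℤ) (μ : ℝ) (T T1 T2 : ℝ → ℝ) (y : ℝ) : Prop :=
  y * (deriv T1 y + μ * T1 y) =
      -(((m : ℝ) + (deriv T y - μ * T y) * (T1 y - T2 y)) * (T1 y - T2 y)) ∧
  y * (deriv T2 y - μ * T2 y) =
      ((n : ℝ) + (deriv T y + μ * T y) * (T1 y - T2 y)) * (T1 y - T2 y) ∧
  y * deriv (deriv T) y - ((n : ℝ) + (m : ℝ)) * deriv T y =
      2 * (deriv T y + μ * T y) * (deriv T y - μ * T y) * (T1 y - T2 y)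
        - ((n : ℝ) - (m : ℝ) - μ * y) * μ * T y

/-!
Under the ansatz every first partial derivative of `u`, `u1`, `u2`, and also `∂β ∂α u`, is
again of the form `g (α - β) · exp (±μ (α + β))`, with a profile `g` built from `T`, `T1`,
`T2`, their derivatives and `μ`. After substitution the exponential factors cancel, and each
equation of `Σ_H1(n,m)` at `(α, β)` becomes a nonzero multiple of the corresponding reduced
ODE at `y = α - β`. Every `y ∈ I` arises this way, from `(α, β) = (y, 0)`.
-/

noncomputable def similarityAnsatz (ν : ℝ) (f : ℝ → ℝ) (q : ℝ × ℝ) : ℝ :=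
  f (q.1 - q.2) * Real.exp (ν * (q.1 + q.2))

lemma eq_iff_eq_of_sub_eq_mul_sub {R : Type*} [Ring R] [NoZeroDivisors R] {a b c d k : R}
    (hk : k ≠ 0) (h : a - b = k * (c - d)) :
    a = b ↔ c = d := by
  rw [← sub_eq_zero, h, mul_eq_zero, sub_eq_zero, or_iff_right hk]

lemma pdb_congr_of_eventuallyEq {f g : ℝ × ℝ → ℝ} {p : ℝ × ℝ} (h : f =ᶠ[nhds p] g) :
    pdb f p = pdb g p := by
  have hcont : ContinuousAt (fun y : ℝ => (p.1, y)) p.2 := by fun_prop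
  exact Filter.EventuallyEq.deriv_eq (hcont.eventually h)

section Ansatz

variable {ν : ℝ} {f : ℝ → ℝ} {f' : ℝ} {p : ℝ × ℝ}

lemma pda_similarityAnsatz (hf : HasDerivAt f f' (p.1 - p.2)) :
    pda (similarityAnsatz ν f) p = (f' + ν * f (p.1 - p.2)) * Real.exp (ν * (p.1 + p.2)) := by
  have hexp : HasDerivAt (fun x => Real.exp (ν * (x + p.2)))
      (Real.exp (ν * (p.1 + p.2)) * ν) p.1 :=
    (((hasDerivAt_id p.1).add_const p.2).const_mul ν).exp.congr_deriv (by simp)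
  have := (hf.comp_sub_const p.1 p.2).mul hexp
  exact this.deriv.trans (by ring)

lemma pdb_similarityAnsatz (hf : HasDerivAt f f' (p.1 - p.2)) :
    pdb (similarityAnsatz ν f) p = (-f' + ν * f (p.1 - p.2)) * Real.exp (ν * (p.1 + p.2)) := by
  have hexp : HasDerivAt (fun y => Real.exp (ν * (p.1 + y)))
      (Real.exp (ν * (p.1 + p.2)) * ν) p.2 :=
    (((hasDerivAt_id p.2).const_add p.1).const_mul ν).exp.congr_deriv (by simp)
  have := (hf.comp_const_sub p.1 p.2).mul hexp
  exact this.deriv.trans (by ring)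

lemma pda_similarityAnsatz_eqOn {I : Set ℝ} (hf : DifferentiableOn ℝ f I) (hI : IsOpen I) :
    Set.EqOn (pda (similarityAnsatz ν f))
      (similarityAnsatz ν (fun z => deriv f z + ν * f z)) {q | q.1 - q.2 ∈ I} := fun _ hq =>
  pda_similarityAnsatz ((hf.differentiableAt (hI.mem_nhds hq)).hasDerivAt)

lemma pdb_pda_similarityAnsatz {I : Set ℝ} {f'' : ℝ} (hf : DifferentiableOn ℝ f I)
    (hI : IsOpen I) (hp : p.1 - p.2 ∈ I) (hf' : HasDerivAt (deriv f) f'' (p.1 - p.2)) :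
    pdb (pda (similarityAnsatz ν f)) p =
      (-(f'' + ν * deriv f (p.1 - p.2)) + ν * (deriv f (p.1 - p.2) + ν * f (p.1 - p.2)))
        * Real.exp (ν * (p.1 + p.2)) := by
  have hD : IsOpen {q : ℝ × ℝ | q.1 - q.2 ∈ I} := hI.preimage (by fun_prop)
  rw [pdb_congr_of_eventuallyEq ((pda_similarityAnsatz_eqOn hf hI).eventuallyEq_of_mem
    (hD.mem_nhds hp))]
  exact pdb_similarityAnsatz
    (hf'.add (((hf.differentiableAt (hI.mem_nhds hp)).hasDerivAt).const_mul ν))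

end Ansatz

lemma sigmaH1_similarityAnsatz_iff {n m : ℤ} {μ : ℝ} {T T1 T2 : ℝ → ℝ} {I : Set ℝ}
    (hI : IsOpen I) (hT : ContDiffOn ℝ 2 T I) (hT1 : DifferentiableOn ℝ T1 I)
    (hT2 : DifferentiableOn ℝ T2 I) {p : ℝ × ℝ} (hp : p.1 - p.2 ∈ I)
    (hy : p.1 - p.2 ≠ 0) :
    SigmaH1 n m (similarityAnsatz μ T) (similarityAnsatz (-μ) T1)
        (similarityAnsatz (-μ) T2) p ↔ sysH1redP5 n m μ T T1 T2 (p.1 - p.2) := by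
  have hnhds := hI.mem_nhds hp
  have hTd := hT.differentiableOn (by norm_num)
  have hT' : DifferentiableOn ℝ (deriv T) I :=
    (hT.deriv_of_isOpen (m := 1) hI (by norm_num)).differentiableOn (by norm_num)
  unfold SigmaH1 sysH1redP5
  rw [pdb_similarityAnsatz (hT1.differentiableAt hnhds).hasDerivAt,
    pda_similarityAnsatz (hT2.differentiableAt hnhds).hasDerivAt,
    pda_similarityAnsatz (hTd.differentiableAt hnhds).hasDerivAt,
    pdb_similarityAnsatz (hTd.differentiableAt hnhds).hasDerivAt,
    pdb_pda_similarityAnsatz hTd hI hp (hT'.differentiableAt hnhds).hasDerivAt]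
  simp only [similarityAnsatz, neg_mul, Real.exp_neg]
  set e := Real.exp (μ * (p.1 + p.2))
  have he : e ≠ 0 := Real.exp_ne_zero _
  refine and_congr (eq_iff_eq_of_sub_eq_mul_sub (k := -e⁻¹ / (p.1 - p.2)) (by simp [he, hy])
    (by field_simp; ring)) (and_congr ?_ ?_)
  · exact eq_iff_eq_of_sub_eq_mul_sub (k := e⁻¹ / (p.1 - p.2)) (by simp [he, hy])
      (by field_simp; ring)
  · exact eq_iff_eq_of_sub_eq_mul_sub (k := -e / (p.1 - p.2)) (by simp [he, hy])
      (by field_simp; ring)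

theorem similarity_ansatz_PV_H1_general
    (n m : ℤ) (μ : ℝ) (I : Set ℝ) (hI : IsOpen I)
    (h0 : (0 : ℝ) ∉ I) (T T1 T2 : ℝ → ℝ)
    (hT : ContDiffOn ℝ 2 T I) (hT1 : ContDiffOn ℝ 2 T1 I) (hT2 : ContDiffOn ℝ 2 T2 I) :
    (∀ p : ℝ × ℝ, p.1 - p.2 ∈ I →
      SigmaH1 n m
        (fun q => T (q.1 - q.2) * Real.exp (μ * (q.1 + q.2)))
        (fun q => T1 (q.1 - q.2) * Real.exp (-(μ * (q.1 + q.2))))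
        (fun q => T2 (q.1 - q.2) * Real.exp (-(μ * (q.1 + q.2)))) p) ↔
    (∀ y ∈ I, sysH1redP5 n m μ T T1 T2 y) := by
  have hneg (f : ℝ → ℝ) :
      (fun q : ℝ × ℝ => f (q.1 - q.2) * Real.exp (-(μ * (q.1 + q.2)))) =
        similarityAnsatz (-μ) f := by
    funext q
    simp [similarityAnsatz]
  rw [hneg T1, hneg T2]
  have key {p : ℝ × ℝ} (hp : p.1 - p.2 ∈ I) :=
    sigmaH1_similarityAnsatz_iff (n := n) (m := m) (μ := μ) hI hT
      (hT1.differentiableOn (by norm_num)) (hT2.differentiableOn (by norm_num)) hp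
      (fun h => h0 (h ▸ hp))
  constructor
  · intro h y hy
    simpa using (key (p := (y, 0)) (by simpa)).mp (h _ (by simpa))
  · exact fun h p hp => (key hp).mpr (h _ hp)

/-- Painlevé V similarity ansatz for the H1 reduced system. -/
theorem similarity_ansatz_PV_H1
    (n m : ℤ) (μ : ℝ) (I : Set ℝ) (hI : IsOpen I) (hIc : I.OrdConnected)
    (h0 : (0 : ℝ) ∉ I) (T T1 T2 : ℝ → ℝ)
    (hT : ContDiffOn ℝ 2 T I) (hT1 : ContDiffOn ℝ 2 T1 I) (hT2 : ContDiffOn ℝ 2 T2 I) :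
    (∀ p : ℝ × ℝ, p.1 - p.2 ∈ I →
      SigmaH1 n m
        (fun q => T (q.1 - q.2) * Real.exp (μ * (q.1 + q.2)))
        (fun q => T1 (q.1 - q.2) * Real.exp (-(μ * (q.1 + q.2))))
        (fun q => T2 (q.1 - q.2) * Real.exp (-(μ * (q.1 + q.2)))) p) ↔
    (∀ y ∈ I, sysH1redP5 n m μ T T1 T2 y) :=
  similarity_ansatz_PV_H1_general n m μ I hI h0 T T1 T2 hT hT1 hT2
end
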